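/- arXiv:2504.20550 — 2 statements merged into one kernel-verified Lean document; each statement's English description precedes it below -/
import Mathlib

section
/- Let Ψ₁, ..., Ψ_m be i.i.d. Bernoulli random variables with success probability 1/M where 1/M < λ₂ ≤ 1 and M ≥ 2. Then Pr[(1/m)∑_{j=1}^m Ψⱼ > λ₂] < 2^{-m(λ₂ log₂ M - 1)}. -/
/-!
Chernoff's bound with the exponent `t = log M`: a `{0, 1}`-valued variable with success
probability `1 / M` has moment generating function `1 + (M - 1) / M = 2 - 1 / M < 2` there,
so by independence `P[∑ Ψⱼ ≥ λ₂ m] ≤ M ^ (-λ₂ m) (2 - 1 / M) ^ m < 2 ^ (-m (λ₂ log₂ M - 1))`.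
-/

open MeasureTheory ProbabilityTheory Real

section ZeroOneValued

variable {Ω : Type*} [MeasurableSpace Ω] {μ : Measure Ω}

lemma mgf_of_zero_or_one [IsProbabilityMeasure μ] {X : Ω → ℝ} (hXm : Measurable X)
    (hX : ∀ ω, X ω = 0 ∨ X ω = 1) (t : ℝ) :
    mgf X μ t = 1 + (exp t - 1) * μ.real {ω | X ω = 1} := by
  have hA : MeasurableSet {ω | X ω = 1} := hXm (measurableSet_singleton 1)
  have hexp : (fun ω ↦ exp (t * X ω)) = fun ω ↦ 1 + (exp t - 1) * {ω | X ω = 1}.indicator 1 ω := by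
    funext ω
    rcases hX ω with h | h <;> simp [h]
  rw [mgf, hexp, integral_add (integrable_const 1) ((integrable_indicator_iff hA).2
    (integrable_const 1).integrableOn |>.const_mul _), integral_const_mul, integral_indicator_one hA]
  simp

lemma measureReal_le_sum_le_of_zero_or_one {ι : Type*} {X : ι → Ω → ℝ} (hindep : iIndepFun X μ)
    (hXm : ∀ i, Measurable (X i)) (hX : ∀ i ω, X i ω = 0 ∨ X i ω = 1) (s : Finset ι)
    (a : ℝ) {t : ℝ} (ht : 0 ≤ t) :
    μ.real {ω | a ≤ ∑ i ∈ s, X i ω} ≤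
      exp (-t * a) * ∏ i ∈ s, (1 + (exp t - 1) * μ.real {ω | X i ω = 1}) := by
  have := hindep.isProbabilityMeasure
  have hint : Integrable (fun ω ↦ exp (t * (∑ i ∈ s, X i) ω)) μ :=
    hindep.integrable_exp_mul_sum hXm fun i _ ↦ integrable_exp_mul_of_mem_Icc (a := 0) (b := 1)
      (hXm i).aemeasurable (ae_of_all _ fun ω ↦ by rcases hX i ω with h | h <;> simp [h])
  have h := measure_ge_le_exp_mul_mgf a ht hint
  simp only [Finset.sum_apply, hindep.mgf_sum hXm, mgf_of_zero_or_one (hXm _) (hX _)] at h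
  exact h

end ZeroOneValued

lemma exp_neg_log_mul_mul_two_pow (M lam : ℝ) (m : ℕ) :
    exp (-log M * (lam * m)) * 2 ^ m = (2 : ℝ) ^ (-(m : ℝ) * (lam * logb 2 M - 1)) := by
  rw [rpow_def_of_pos two_pos, ← rpow_natCast, rpow_def_of_pos two_pos, ← exp_add, logb]
  congr 1
  field_simp
  ring

theorem bernoulli_chernoff_hashing_general
    {Ω : Type*} [MeasurableSpace Ω] (μ : Measure Ω) [IsProbabilityMeasure μ]
    (m M : ℕ) (hM : 2 ≤ M) (lam2 : ℝ) (hlam2l : 1 / (M : ℝ) < lam2)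
    (Ψ : Fin m → Ω → ℝ)
    (hmeas : ∀ j, Measurable (Ψ j))
    (hval : ∀ j ω, Ψ j ω = 0 ∨ Ψ j ω = 1)
    (hprob : ∀ j, μ {ω | Ψ j ω = 1} = ENNReal.ofReal (1 / (M : ℝ)))
    (hindep : iIndepFun Ψ μ) :
    (μ {ω | lam2 < (1 / (m : ℝ)) * ∑ j, Ψ j ω}).toReal <
      2 ^ (-(m : ℝ) * (lam2 * Real.logb 2 M - 1)) := by
  have hM1 : (1 : ℝ) < M := by exact_mod_cast hM
  have hinvM : 0 < 1 / (M : ℝ) := by positivity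
  have hlam2 : 0 < lam2 := hinvM.trans hlam2l
  rcases Nat.eq_zero_or_pos m with rfl | hm
  · simp [not_lt.2 hlam2.le]
  have hsub : {ω | lam2 < 1 / (m : ℝ) * ∑ j, Ψ j ω} ⊆ {ω | lam2 * m ≤ ∑ j, Ψ j ω} := by
    intro ω (hω : lam2 < 1 / (m : ℝ) * ∑ j, Ψ j ω)
    rw [one_div_mul_eq_div, lt_div_iff₀ (by positivity)] at hω
    exact hω.le
  have hfactor : ∀ j, 1 + (exp (log M) - 1) * μ.real {ω | Ψ j ω = 1} = 2 - 1 / (M : ℝ) := by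
    intro j
    rw [exp_log (by positivity), measureReal_def, hprob j, ENNReal.toReal_ofReal hinvM.le]
    field_simp
    ring
  calc (μ {ω | lam2 < 1 / (m : ℝ) * ∑ j, Ψ j ω}).toReal
      ≤ μ.real {ω | lam2 * m ≤ ∑ j, Ψ j ω} := measureReal_mono hsub
    _ ≤ exp (-log M * (lam2 * m)) * ∏ j, (1 + (exp (log M) - 1) * μ.real {ω | Ψ j ω = 1}) :=
        measureReal_le_sum_le_of_zero_or_one hindep hmeas hval _ _ (log_nonneg hM1.le)
    _ = exp (-log M * (lam2 * m)) * (2 - 1 / (M : ℝ)) ^ m := by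
        simp only [hfactor, Finset.prod_const, Finset.card_univ, Fintype.card_fin]
    _ < exp (-log M * (lam2 * m)) * 2 ^ m := by
        gcongr
        · linarith [(div_le_one (by positivity : (0:ℝ) < M)).2 hM1.le]
        · linarith
    _ = _ := exp_neg_log_mul_mul_two_pow _ _ _

/-- Chernoff-type hashing collision bound: for i.i.d. Bernoulli(1/M)
variables with `1/M < λ₂ ≤ 1`, the probability that their average exceeds
`λ₂` is below `2^{-m(λ₂ log₂ M - 1)}`. -/
theorem bernoulli_chernoff_hashing
    {Ω : Type*} [MeasurableSpace Ω] (μ : Measure Ω) [IsProbabilityMeasure μ]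
    (m M : ℕ) (hM : 2 ≤ M) (lam2 : ℝ) (hlam2l : 1 / (M : ℝ) < lam2)
    (hlam2u : lam2 ≤ 1)
    (Ψ : Fin m → Ω → ℝ)
    (hmeas : ∀ j, Measurable (Ψ j))
    (hval : ∀ j ω, Ψ j ω = 0 ∨ Ψ j ω = 1)
    (hprob : ∀ j, μ {ω | Ψ j ω = 1} = ENNReal.ofReal (1 / (M : ℝ)))
    (hindep : iIndepFun Ψ μ) :
    (μ {ω | lam2 < (1 / (m : ℝ)) * ∑ j, Ψ j ω}).toReal <
      2 ^ (-(m : ℝ) * (lam2 * Real.logb 2 M - 1)) :=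
  bernoulli_chernoff_hashing_general μ m M hM lam2 hlam2l Ψ hmeas hval hprob hindep
end

section
/- For λ → ∞, the entropy of a Poisson random variable with mean λ satisfies H(Pois(λ)) = (1/2)log₂(2πeλ) - 1/(12λ ln 2) + O(1/λ²); in particular H(Pois(λ)) - (1/2)log₂(2πeλ) → 0 as λ → ∞. -/
/-!
With `Y ~ Pois(λ)` and entropy in nats, `H = λ - λ log λ + E[log Y!]`, so everything rests on
`E[log Y!]`. Stirling's formula with Robbins' remainder, written around `y + 1` so that it holds
for every `y ≥ 0`, gives
`log y! = (y + 1/2) log (y + 1) - (y + 1) + (1/2) log 2π + 1 / (12 (y + 1)) + O(1 / ((y + 1)(y + 2)))`.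
Writing `y + 1 = λ (1 + s)` and expanding `log (1 + s)` to fifth order costs `(y + 1) O(s⁶)`,
uniformly in `s > -1`. What remains is affine in `1 / (y + 1)` and polynomial in `y`, and its
Poisson mean is exact: the central moments come from Stein's identity `E[Y g(Y)] = λ E[g(Y + 1)]`
and `E[1 / (Y + 1)] = (1 - e^{-λ}) / λ`. The errors have mean `O(λ⁻²)` because
`E[1 / ((Y + 1)(Y + 2))] ≤ λ⁻²` and `E[(Y + 1 - λ)⁶] = O(λ³)`.
-/

open Filter

/-- The Poisson pmf with mean `lam`. -/
noncomputable def poissonPMF (lam : ℝ) (y : ℕ) : ℝ :=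
  Real.exp (-lam) * lam ^ y / (Nat.factorial y)

/-- Shannon entropy (in bits) of the Poisson distribution with mean `lam`. -/
noncomputable def poissonEntropy (lam : ℝ) : ℝ :=
  ∑' y : ℕ, -(poissonPMF lam y * Real.logb 2 (poissonPMF lam y))

open Finset Real

lemma hasSum_mul_add_one_pow {w f m : ℕ → ℝ} {k : ℕ}
    (h : ∀ j ≤ k, HasSum (fun y ↦ w y * f y ^ j) (m j)) :
    HasSum (fun y ↦ w y * (f y + 1) ^ k) (∑ j ∈ range (k + 1), (k.choose j : ℝ) * m j) := by
  have hexpand (y : ℕ) : w y * (f y + 1) ^ k =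
      ∑ j ∈ range (k + 1), (k.choose j : ℝ) * (w y * f y ^ j) := by
    rw [add_pow, mul_sum]
    exact sum_congr rfl fun j _ ↦ by ring
  simp_rw [hexpand]
  exact hasSum_sum fun j hj ↦
    (h j (Nat.lt_succ_iff.mp (mem_range.mp hj))).mul_left (k.choose j : ℝ)

section PoissonMoments

variable {lam : ℝ}

lemma poissonPMF_pos (hlam : 0 < lam) (y : ℕ) : 0 < poissonPMF lam y := by
  unfold poissonPMF
  positivity

lemma hasSum_poissonPMF (lam : ℝ) : HasSum (poissonPMF lam) 1 := by
  have h := (NormedSpace.expSeries_div_hasSum_exp lam).mul_left (exp (-lam))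
  rw [← Real.exp_eq_exp_ℝ, ← Real.exp_add, neg_add_cancel, Real.exp_zero] at h
  simp only [← mul_div_assoc] at h
  exact h

lemma poissonPMF_succ_mul (lam : ℝ) (y : ℕ) :
    poissonPMF lam (y + 1) * (y + 1) = lam * poissonPMF lam y := by
  simp only [poissonPMF, Nat.factorial_succ, Nat.cast_mul, Nat.cast_succ, pow_succ]
  field_simp

/-- Stein's identity `E[Y g(Y)] = λ E[g(Y + 1)]` for the Poisson law. -/
lemma HasSum.poissonPMF_mul_natCast_mul {g : ℕ → ℝ} {A : ℝ}
    (h : HasSum (fun y ↦ poissonPMF lam y * g (y + 1)) A) :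
    HasSum (fun y ↦ poissonPMF lam y * (y * g y)) (lam * A) := by
  have hshift : (fun y : ℕ ↦ poissonPMF lam (y + 1) * ((y + 1 : ℕ) * g (y + 1))) =
      fun y ↦ lam * (poissonPMF lam y * g (y + 1)) := by
    ext y
    rw [Nat.cast_succ, ← mul_assoc, poissonPMF_succ_mul, mul_assoc]
  rw [← hasSum_nat_add_iff' 1, hshift]
  simpa using h.mul_left lam

-- The recursion is Stein's identity applied to `g y = (y - λ) ^ k`.
noncomputable def poissonCentralMoment (lam : ℝ) : ℕ → ℝ
  | 0 => 1
  | k + 1 => lam * ∑ j : Fin k, (k.choose j : ℝ) * poissonCentralMoment lam j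

lemma hasSum_poissonPMF_mul_sub_pow (lam : ℝ) (k : ℕ) :
    HasSum (fun y ↦ poissonPMF lam y * ((y : ℝ) - lam) ^ k) (poissonCentralMoment lam k) := by
  induction k using Nat.strong_induction_on with
  | _ k ih =>
  cases k with
  | zero => simpa [poissonCentralMoment] using hasSum_poissonPMF lam
  | succ k =>
    have hshift := hasSum_mul_add_one_pow (w := poissonPMF lam) (f := fun y ↦ (y : ℝ) - lam)
      fun j hj ↦ ih j (Nat.lt_succ_of_le hj)
    have hstein := HasSum.poissonPMF_mul_natCast_mul (g := fun y ↦ ((y : ℝ) - lam) ^ k)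
      (by simpa [add_sub_right_comm] using hshift)
    have hrec : poissonCentralMoment lam (k + 1) = lam * ∑ j ∈ range (k + 1),
        (k.choose j : ℝ) * poissonCentralMoment lam j - lam * poissonCentralMoment lam k := by
      rw [poissonCentralMoment.eq_2, Fin.sum_univ_eq_sum_range (fun j ↦ (k.choose j : ℝ) *
        poissonCentralMoment lam j), sum_range_succ, Nat.choose_self]
      ring
    have hsplit : (fun y : ℕ ↦ poissonPMF lam y * ((y : ℝ) - lam) ^ (k + 1)) = fun y ↦
        poissonPMF lam y * (y * ((y : ℝ) - lam) ^ k) -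
          lam * (poissonPMF lam y * ((y : ℝ) - lam) ^ k) := by
      ext y
      ring
    rw [hrec, hsplit]
    exact hstein.sub ((ih k k.lt_succ_self).mul_left lam)

section Values

variable (lam : ℝ)

@[simp] lemma poissonCentralMoment_zero : poissonCentralMoment lam 0 = 1 :=
  poissonCentralMoment.eq_1 lam

@[simp] lemma poissonCentralMoment_one : poissonCentralMoment lam 1 = 0 := by
  simp [poissonCentralMoment.eq_2]

@[simp] lemma poissonCentralMoment_two : poissonCentralMoment lam 2 = lam := by
  simp [poissonCentralMoment.eq_2]

@[simp] lemma poissonCentralMoment_three : poissonCentralMoment lam 3 = lam := by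
  simp [poissonCentralMoment.eq_2, Fin.sum_univ_succ]

@[simp] lemma poissonCentralMoment_four : poissonCentralMoment lam 4 = 3 * lam ^ 2 + lam := by
  simp [poissonCentralMoment.eq_2, Fin.sum_univ_succ, Nat.choose]
  ring

@[simp] lemma poissonCentralMoment_five : poissonCentralMoment lam 5 = 10 * lam ^ 2 + lam := by
  simp [poissonCentralMoment.eq_2, Fin.sum_univ_succ, Nat.choose]
  ring

@[simp] lemma poissonCentralMoment_six :
    poissonCentralMoment lam 6 = 15 * lam ^ 3 + 25 * lam ^ 2 + lam := by
  simp [poissonCentralMoment.eq_2, Fin.sum_univ_succ, Nat.choose]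
  ring

end Values

lemma hasSum_poissonPMF_mul_add_one_sub_pow (lam : ℝ) (k : ℕ) :
    HasSum (fun y ↦ poissonPMF lam y * ((y : ℝ) + 1 - lam) ^ k)
      (∑ j ∈ range (k + 1), (k.choose j : ℝ) * poissonCentralMoment lam j) := by
  simpa [sub_add_eq_add_sub] using hasSum_mul_add_one_pow (w := poissonPMF lam)
    (f := fun y ↦ (y : ℝ) - lam) fun j _ ↦ hasSum_poissonPMF_mul_sub_pow lam j

lemma hasSum_poissonPMF_div_ascFactorial (hlam : lam ≠ 0) (j : ℕ) :
    HasSum (fun y ↦ poissonPMF lam y / ((y + 1).ascFactorial j : ℝ))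
      ((1 - ∑ i ∈ range j, poissonPMF lam i) / lam ^ j) := by
  have hshift (y : ℕ) : poissonPMF lam y / ((y + 1).ascFactorial j : ℝ) =
      poissonPMF lam (y + j) / lam ^ j := by
    simp only [poissonPMF, ← Nat.factorial_mul_ascFactorial y j, Nat.cast_mul, pow_add]
    have : ((y + 1).ascFactorial j : ℝ) ≠ 0 := by positivity
    field_simp
  simp_rw [hshift]
  exact ((hasSum_nat_add_iff' j).mpr (hasSum_poissonPMF lam)).div_const _

end PoissonMoments

section Stirling

open Stirling

lemma le_of_tendsto_of_sub_succ_le {a b : ℕ → ℝ} {c : ℝ} (ha : Tendsto a atTop (nhds c))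
    (hb : Tendsto b atTop (nhds c)) (h : ∀ n, a n - a (n + 1) ≤ b n - b (n + 1)) (n : ℕ) :
    a n ≤ b n := by
  have hmono : Monotone (a - b) := monotone_nat_of_le_succ fun n ↦ by
    simp only [Pi.sub_apply]
    linarith [h n]
  have hlim := ha.sub hb
  rw [sub_self] at hlim
  simpa [sub_nonpos] using hmono.ge_of_tendsto hlim n

lemma tendsto_log_stirlingSeq_succ :
    Tendsto (fun n ↦ log (stirlingSeq (n + 1))) atTop (nhds (log √π)) :=
  (tendsto_stirlingSeq_sqrt_pi.comp (tendsto_add_atTop_nat 1)).log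
    (Real.sqrt_pos.mpr pi_pos).ne'

lemma tendsto_const_add_one_div_twelve_mul_add (a c : ℝ) :
    Tendsto (fun n : ℕ ↦ a + 1 / (12 * (n + c))) atTop (nhds a) := by
  have := (tendsto_atTop_add_const_right _ c tendsto_natCast_atTop_atTop).const_mul_atTop
    (by norm_num : (0 : ℝ) < 12)
  simpa using (this.inv_tendsto_atTop.congr fun n ↦ (one_div _).symm).const_add a

/-- The first term of the series for the step already dominates `1 / (12 (n + 2) (n + 3))`. -/
lemma one_div_le_log_stirlingSeq_sub_succ (n : ℕ) :
    1 / (12 * ((n : ℝ) + 2) * ((n : ℝ) + 3)) ≤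
      log (stirlingSeq (n + 1)) - log (stirlingSeq (n + 2)) := by
  refine le_trans ?_ (le_hasSum (log_stirlingSeq_sdiff_hasSum n) 0 fun k _ ↦ by positivity)
  push_cast
  rw [div_le_iff₀ (by positivity)]
  field_simp
  nlinarith

lemma log_stirlingSeq_succ_sub_le (n : ℕ) :
    log (stirlingSeq (n + 1)) - log √π ≤ 1 / (12 * ((n : ℝ) + 1)) := by
  have hstep (m : ℕ) : log (stirlingSeq (m + 1)) - log (stirlingSeq (m + 1 + 1)) ≤
      (log √π + 1 / (12 * ((m : ℝ) + 1))) - (log √π + 1 / (12 * (((m + 1 : ℕ) : ℝ) + 1))) := by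
    have := log_stirlingSeq_sdiff_le (m + 1)
    push_cast at this ⊢
    convert this using 1
    field_simp
    ring
  have := le_of_tendsto_of_sub_succ_le tendsto_log_stirlingSeq_succ
    (tendsto_const_add_one_div_twelve_mul_add _ 1) hstep n
  linarith

lemma one_div_le_log_stirlingSeq_succ_sub (n : ℕ) :
    1 / (12 * ((n : ℝ) + 2)) ≤ log (stirlingSeq (n + 1)) - log √π := by
  have hstep (m : ℕ) : (log √π + 1 / (12 * ((m : ℝ) + 2))) -
      (log √π + 1 / (12 * (((m + 1 : ℕ) : ℝ) + 2))) ≤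
      log (stirlingSeq (m + 1)) - log (stirlingSeq (m + 1 + 1)) := by
    have := one_div_le_log_stirlingSeq_sub_succ m
    push_cast
    convert this using 1
    field_simp
    ring
  have := le_of_tendsto_of_sub_succ_le (tendsto_const_add_one_div_twelve_mul_add _ 2)
    tendsto_log_stirlingSeq_succ hstep n
  linarith

lemma log_factorial_eq (n : ℕ) :
    log (n.factorial : ℝ) = (n + 1 / 2) * log (n + 1) - (n + 1) + log (2 * π) / 2 +
      (log (stirlingSeq (n + 1)) - log √π) := by
  have hn : ((n + 1 : ℕ) : ℝ) ≠ 0 := by positivity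
  rw [log_stirlingSeq_formula, Nat.factorial_succ, Nat.cast_mul,
    log_mul hn (by positivity), log_div hn (exp_pos 1).ne', log_exp, log_mul two_ne_zero hn,
    log_mul two_ne_zero pi_ne_zero, log_sqrt pi_pos.le]
  push_cast
  ring

lemma abs_log_factorial_sub_stirling_le (n : ℕ) :
    |log (n.factorial : ℝ) - ((n + 1 / 2) * log (n + 1) - (n + 1) + log (2 * π) / 2 +
      1 / (12 * (n + 1)))| ≤ 1 / (12 * (n + 1) * (n + 2)) := by
  have hupper := log_stirlingSeq_succ_sub_le n
  have hlower := one_div_le_log_stirlingSeq_succ_sub n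
  have hgap : 1 / (12 * ((n : ℝ) + 1)) - 1 / (12 * (n + 2)) = 1 / (12 * (n + 1) * (n + 2)) := by
    field_simp
    ring
  rw [log_factorial_eq, abs_le]
  constructor <;> linarith

end Stirling

noncomputable def logTaylor (n : ℕ) (s : ℝ) : ℝ :=
  ∑ i ∈ range n, (-1) ^ i * s ^ (i + 1) / (i + 1)

lemma abs_log_one_add_sub_logTaylor_le {s : ℝ} (hs : |s| < 1) (n : ℕ) :
    |log (1 + s) - logTaylor n s| ≤ |s| ^ (n + 1) / (1 - |s|) := by
  have h := abs_log_sub_add_sum_range_le (x := -s) (by rwa [abs_neg]) n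
  have hsum : ∑ i ∈ range n, (-s) ^ (i + 1) / (i + 1) = -logTaylor n s := by
    rw [logTaylor, ← sum_neg_distrib]
    exact sum_congr rfl fun i _ ↦ by ring
  rwa [hsum, abs_neg, sub_neg_eq_add, neg_add_eq_sub] at h

lemma abs_logTaylor_le (n : ℕ) (s : ℝ) : |logTaylor n s| ≤ ∑ i ∈ range n, |s| ^ (i + 1) := by
  refine (abs_sum_le_sum_abs _ _).trans (sum_le_sum fun i _ ↦ ?_)
  rw [abs_div, abs_mul, abs_pow, abs_neg, abs_one, one_pow, one_mul, abs_pow]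
  exact div_le_self (by positivity) (by rw [abs_of_pos (by positivity)]; linarith)

lemma abs_one_add_mul_log_one_add_le {s : ℝ} (hs : -1 < s) :
    |(1 + s) * log (1 + s)| ≤ |s| + s ^ 2 := by
  have hpos : 0 < 1 + s := by linarith
  have hlower : s ≤ (1 + s) * log (1 + s) := by
    have := one_sub_inv_le_log_of_pos hpos
    calc s = (1 + s) * (1 - (1 + s)⁻¹) := by field_simp; ring
      _ ≤ _ := mul_le_mul_of_nonneg_left this hpos.le
  have hupper : (1 + s) * log (1 + s) ≤ s + s ^ 2 := by
    have := log_le_sub_one_of_pos hpos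
    nlinarith
  rw [abs_le]
  constructor <;> nlinarith [neg_abs_le s, le_abs_self s]

lemma pow_le_two_pow_sub_mul_pow {a : ℝ} (ha : 1 / 2 ≤ a) {k n : ℕ} (hkn : k ≤ n) :
    a ^ k ≤ 2 ^ (n - k) * a ^ n :=
  calc a ^ k ≤ a ^ k * (2 * a) ^ (n - k) :=
        le_mul_of_one_le_right (by positivity) (one_le_pow₀ (by linarith))
    _ = 2 ^ (n - k) * a ^ n := by rw [mul_pow, mul_left_comm, pow_mul_pow_sub _ hkn]

lemma one_add_mul_abs_log_one_add_sub_logTaylor_le_of_abs_le {s : ℝ} (hs : |s| ≤ 1 / 2) :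
    (1 + s) * |log (1 + s) - logTaylor 5 s| ≤ 3 * s ^ 6 := by
  have htaylor := abs_log_one_add_sub_logTaylor_le (by linarith) 5
  have hs6 : |s| ^ 6 = s ^ 6 := by rw [← abs_pow, abs_of_nonneg (by positivity)]
  have hrem : |s| ^ 6 / (1 - |s|) ≤ 2 * s ^ 6 := by
    rw [div_le_iff₀ (by linarith), ← hs6]
    nlinarith [pow_nonneg (abs_nonneg s) 6]
  calc (1 + s) * |log (1 + s) - logTaylor 5 s| ≤ 3 / 2 * (2 * s ^ 6) := by
        gcongr
        · linarith [le_abs_self s]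
        · exact htaylor.trans hrem
    _ = 3 * s ^ 6 := by ring

/-- The weight `1 + s` tames the logarithmic singularity at `s = -1`. -/
lemma one_add_mul_abs_log_one_add_sub_logTaylor_le_of_lt_abs {s : ℝ} (hs : -1 < s)
    (hlarge : 1 / 2 < |s|) : (1 + s) * |log (1 + s) - logTaylor 5 s| ≤ 150 * s ^ 6 := by
  have hpos : 0 < 1 + s := by linarith
  set a := |s| with ha
  have htri : (1 + s) * |log (1 + s) - logTaylor 5 s| ≤
      |(1 + s) * log (1 + s)| + (1 + a) * |logTaylor 5 s| :=
    calc (1 + s) * |log (1 + s) - logTaylor 5 s|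
        = |(1 + s) * log (1 + s) - (1 + s) * logTaylor 5 s| := by
          rw [← mul_sub, abs_mul, abs_of_pos hpos]
      _ ≤ |(1 + s) * log (1 + s)| + |(1 + s) * logTaylor 5 s| := abs_sub _ _
      _ ≤ _ := by
          rw [abs_mul (1 + s) (logTaylor 5 s), abs_of_pos hpos]
          gcongr
          exact le_abs_self s
  have hlog := abs_one_add_mul_log_one_add_le hs
  have hpoly := abs_logTaylor_le 5 s
  simp only [sum_range_succ, sum_range_zero, zero_add, ← ha] at hpoly
  have hT := mul_le_mul_of_nonneg_left hpoly (by positivity : (0 : ℝ) ≤ 1 + a)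
  have hsq : s ^ 2 = a ^ 2 := by rw [ha, sq_abs]
  have hs6 : a ^ 6 = s ^ 6 := by rw [ha, ← abs_pow, abs_of_nonneg (by positivity)]
  have h1 := pow_le_two_pow_sub_mul_pow hlarge.le (show 1 ≤ 6 by norm_num)
  have h2 := pow_le_two_pow_sub_mul_pow hlarge.le (show 2 ≤ 6 by norm_num)
  have h3 := pow_le_two_pow_sub_mul_pow hlarge.le (show 3 ≤ 6 by norm_num)
  have h4 := pow_le_two_pow_sub_mul_pow hlarge.le (show 4 ≤ 6 by norm_num)
  have h5 := pow_le_two_pow_sub_mul_pow hlarge.le (show 5 ≤ 6 by norm_num)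
  norm_num at h1 h2 h3 h4 h5 hT
  nlinarith

lemma one_add_mul_abs_log_one_add_sub_logTaylor_le {s : ℝ} (hs : -1 < s) :
    (1 + s) * |log (1 + s) - logTaylor 5 s| ≤ 150 * s ^ 6 := by
  rcases le_or_gt |s| (1 / 2) with hsmall | hlarge
  · exact (one_add_mul_abs_log_one_add_sub_logTaylor_le_of_abs_le hsmall).trans
      (by nlinarith [pow_two_nonneg (s ^ 3)])
  · exact one_add_mul_abs_log_one_add_sub_logTaylor_le_of_lt_abs hs hlarge

lemma abs_tsum_mul_sub_le {w f g h : ℕ → ℝ} {G B : ℝ} (hw : ∀ y, 0 ≤ w y)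
    (hg : HasSum (fun y ↦ w y * g y) G) (hh : HasSum (fun y ↦ w y * h y) B)
    (hfg : ∀ y, |f y - g y| ≤ h y) :
    Summable (fun y ↦ w y * f y) ∧ |∑' y, w y * f y - G| ≤ B := by
  have hdiff (y : ℕ) : ‖w y * f y - w y * g y‖ ≤ w y * h y := by
    rw [Real.norm_eq_abs, ← mul_sub, abs_mul, abs_of_nonneg (hw y)]
    exact mul_le_mul_of_nonneg_left (hfg y) (hw y)
  have hs := Summable.of_norm_bounded hh.summable hdiff
  have hf : Summable (fun y ↦ w y * f y) := by simpa using hs.add hg.summable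
  refine ⟨hf, ?_⟩
  have := tsum_of_norm_bounded hh hdiff
  rwa [Real.norm_eq_abs, hf.tsum_sub hg.summable, hg.tsum_eq] at this

section LogFactorialMean

variable {lam : ℝ}

/-- Stirling's formula for `log y!` with `log (y + 1)` expanded to fifth order around `log λ`. -/
noncomputable def logFactorialApprox (lam : ℝ) (y : ℕ) : ℝ :=
  (y + 1 / 2) * (log lam + logTaylor 5 ((y + 1 - lam) / lam)) - (y + 1) + log (2 * π) / 2 +
    1 / (12 * (y + 1))

lemma abs_log_factorial_sub_logFactorialApprox_le (hlam : 0 < lam) (y : ℕ) :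
    |log (y.factorial : ℝ) - logFactorialApprox lam y| ≤
      1 / (12 * (y + 1) * (y + 2)) + 150 * lam * (((y : ℝ) + 1 - lam) / lam) ^ 6 := by
  set s := ((y : ℝ) + 1 - lam) / lam
  have h1s : 1 + s = (y + 1) / lam := by simp only [s]; field_simp; ring
  have hlog : log ((y : ℝ) + 1) = log lam + log (1 + s) := by
    rw [h1s, log_div (by positivity) hlam.ne']
    ring
  have htaylor : ((y : ℝ) + 1 / 2) * |log (1 + s) - logTaylor 5 s| ≤ 150 * lam * s ^ 6 := by
    have hy : (y : ℝ) + 1 = lam * (1 + s) := by rw [h1s]; field_simp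
    have hs : -1 < s := by linarith [show 0 < 1 + s by rw [h1s]; positivity]
    calc ((y : ℝ) + 1 / 2) * |log (1 + s) - logTaylor 5 s|
        ≤ lam * ((1 + s) * |log (1 + s) - logTaylor 5 s|) := by
          rw [← mul_assoc, ← hy]
          exact mul_le_mul_of_nonneg_right (by linarith) (abs_nonneg _)
      _ ≤ lam * (150 * s ^ 6) :=
          mul_le_mul_of_nonneg_left (one_add_mul_abs_log_one_add_sub_logTaylor_le hs) hlam.le
      _ = 150 * lam * s ^ 6 := by ring
  have hsplit : log (y.factorial : ℝ) - logFactorialApprox lam y =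
      (log (y.factorial : ℝ) - ((y + 1 / 2) * log (y + 1) - (y + 1) + log (2 * π) / 2 +
        1 / (12 * (y + 1)))) + (y + 1 / 2) * (log (1 + s) - logTaylor 5 s) := by
    rw [logFactorialApprox, hlog]
    ring
  rw [hsplit]
  refine (abs_add_le _ _).trans (add_le_add (abs_log_factorial_sub_stirling_le y) ?_)
  rwa [abs_mul, abs_of_pos (by positivity)]

lemma log_two_pi_exp_one_mul (hlam : 0 < lam) :
    log (2 * π * exp 1 * lam) = log (2 * π) + 1 + log lam := by
  rw [log_mul (by positivity) hlam.ne', log_mul (by positivity) (exp_pos 1).ne', log_exp]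

-- What the central moments of order at most six and `E[1 / (Y + 1)]` leave over in the mean of
-- `logFactorialApprox` beyond its main terms.
noncomputable def logFactorialApproxMeanRemainder (lam : ℝ) : ℝ :=
  (59 / 24 * lam ^ 4 + 2819 / 120 * lam ^ 3 + 71 / 8 * lam ^ 2 + lam / 10) / lam ^ 6 -
    exp (-lam) / (12 * lam)

lemma hasSum_poissonPMF_mul_logFactorialApprox (hlam : 0 < lam) :
    HasSum (fun y ↦ poissonPMF lam y * logFactorialApprox lam y)
      (lam * log lam - lam + log (2 * π * exp 1 * lam) / 2 - 1 / (12 * lam) +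
        logFactorialApproxMeanRemainder lam) := by
  have hν := hasSum_poissonPMF_mul_add_one_sub_pow lam
  have hpoly : HasSum (fun y : ℕ ↦ poissonPMF lam y *
      ((lam - 1 / 2 + (y + 1 - lam)) * logTaylor 5 (((y : ℝ) + 1 - lam) / lam)))
      (∑ i ∈ range 5, (-1) ^ i / ((i + 1) * lam ^ (i + 1)) *
        ((lam - 1 / 2) * (∑ j ∈ range (i + 2), ((i + 1).choose j : ℝ) *
          poissonCentralMoment lam j) +
        ∑ j ∈ range (i + 3), ((i + 2).choose j : ℝ) * poissonCentralMoment lam j)) := by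
    refine (hasSum_sum fun i _ ↦ (((hν (i + 1)).mul_left (lam - 1 / 2)).add
      (hν (i + 2))).mul_left ((-1) ^ i / ((i + 1) * lam ^ (i + 1)))).congr_fun fun y ↦ ?_
    rw [logTaylor, mul_sum, mul_sum]
    refine sum_congr rfl fun i _ ↦ ?_
    rw [div_pow]
    field_simp
    ring
  have hinv := hasSum_poissonPMF_div_ascFactorial hlam.ne' 1
  have H := ((hpoly.add ((hν 1).mul_left (log lam - 1))).add ((hasSum_poissonPMF lam).mul_right
    ((lam - 1 / 2) * log lam - lam + log (2 * π) / 2))).add (hinv.mul_left (1 / 12))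
  convert H using 1
  · ext y
    simp only [logFactorialApprox, Nat.ascFactorial_succ, Nat.ascFactorial_zero]
    push_cast
    field_simp
    ring
  · rw [logFactorialApproxMeanRemainder, log_two_pi_exp_one_mul hlam]
    simp only [one_div, mul_inv_rev, sum_range_succ, Nat.choose_succ_self_right, Nat.cast_add,
      Nat.cast_one, Nat.choose, Nat.choose_self, Nat.choose_succ_self, add_zero, one_mul, zero_add,
      range_one, sum_singleton, pow_zero, CharP.cast_eq_zero, pow_one, range_zero, sum_empty,
      poissonCentralMoment_zero, mul_one, poissonCentralMoment_one, mul_zero,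
      poissonCentralMoment_two, Nat.reduceAdd, Nat.cast_ofNat, poissonCentralMoment_three,
      even_two, Even.neg_pow, one_pow, poissonCentralMoment_four, poissonCentralMoment_five,
      poissonCentralMoment_six, poissonPMF, Nat.factorial_zero, div_one]
    field_simp
    ring

lemma abs_logFactorialApproxMeanRemainder_le (hlam : 1 ≤ lam) :
    |logFactorialApproxMeanRemainder lam| ≤ 35 / lam ^ 2 := by
  have h0 : 0 < lam := by linarith
  have hexp : exp (-lam) / (12 * lam) ≤ 35 / lam ^ 2 := by
    have hle : exp (-lam) * lam ≤ 1 :=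
      calc exp (-lam) * lam ≤ exp (-lam) * exp lam := by
            gcongr
            linarith [add_one_le_exp lam]
        _ = 1 := by rw [← exp_add, neg_add_cancel, exp_zero]
    rw [div_le_div_iff₀ (by positivity) (by positivity)]
    nlinarith
  have hrat : (59 / 24 * lam ^ 4 + 2819 / 120 * lam ^ 3 + 71 / 8 * lam ^ 2 + lam / 10) / lam ^ 6 ≤
      35 / lam ^ 2 := by
    rw [div_le_div_iff₀ (by positivity) (by positivity)]
    have h2 : lam ≤ lam ^ 2 := by nlinarith
    have h3 : lam ^ 2 ≤ lam ^ 3 := by nlinarith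
    have h4 : lam ^ 3 ≤ lam ^ 4 := by nlinarith
    have hN : 59 / 24 * lam ^ 4 + 2819 / 120 * lam ^ 3 + 71 / 8 * lam ^ 2 + lam / 10 ≤
        35 * lam ^ 4 := by linarith
    have := mul_le_mul_of_nonneg_right hN (by positivity : (0 : ℝ) ≤ lam ^ 2)
    linear_combination this
  rw [logFactorialApproxMeanRemainder, abs_le]
  constructor <;> linarith [show 0 ≤ exp (-lam) / (12 * lam) by positivity,
    show 0 ≤ (59 / 24 * lam ^ 4 + 2819 / 120 * lam ^ 3 + 71 / 8 * lam ^ 2 + lam / 10) / lam ^ 6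
      by positivity]

lemma exists_hasSum_poissonPMF_mul_approxError_le (hlam : 1 ≤ lam) :
    ∃ B, HasSum (fun y : ℕ ↦ poissonPMF lam y *
      (1 / (12 * (y + 1) * (y + 2)) + 150 * lam * (((y : ℝ) + 1 - lam) / lam) ^ 6)) B ∧
      B ≤ 30451 / lam ^ 2 := by
  have h0 : 0 < lam := by linarith
  have hstir := (hasSum_poissonPMF_div_ascFactorial h0.ne' 2).mul_left (1 / 12)
  have htaylor := ((hasSum_poissonPMF_mul_add_one_sub_pow lam 6).div_const (lam ^ 6)).mul_left
    (150 * lam)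
  have hν6 : ∑ j ∈ range (6 + 1), (Nat.choose 6 j : ℝ) * poissonCentralMoment lam j =
      15 * lam ^ 3 + 130 * lam ^ 2 + 57 * lam + 1 := by
    simp [sum_range_succ, Nat.choose]
    ring
  refine ⟨_, (hstir.add htaylor).congr_fun fun y ↦ ?_, ?_⟩
  · simp only [Nat.ascFactorial_succ, Nat.ascFactorial_zero]
    push_cast
    rw [div_pow]
    field_simp
    ring
  · have hstirB : 1 / 12 * ((1 - ∑ i ∈ range 2, poissonPMF lam i) / lam ^ 2) ≤ 1 / lam ^ 2 := by
      have : 0 ≤ ∑ i ∈ range 2, poissonPMF lam i :=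
        sum_nonneg fun i _ ↦ (poissonPMF_pos h0 i).le
      rw [← mul_div_assoc]
      exact div_le_div_of_nonneg_right (by linarith) (by positivity)
    have htaylorB : 150 * lam * ((15 * lam ^ 3 + 130 * lam ^ 2 + 57 * lam + 1) / lam ^ 6) ≤
        30450 / lam ^ 2 := by
      rw [mul_div_assoc', div_le_div_iff₀ (by positivity) (by positivity)]
      have h2 : lam ≤ lam ^ 2 := by nlinarith
      have h3 : lam ^ 2 ≤ lam ^ 3 := by nlinarith
      have hN : 15 * lam ^ 3 + 130 * lam ^ 2 + 57 * lam + 1 ≤ 203 * lam ^ 3 := by nlinarith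
      have := mul_le_mul_of_nonneg_left hN (by positivity : (0 : ℝ) ≤ 150 * lam * lam ^ 2)
      linear_combination this
    rw [hν6]
    linarith [show (1 : ℝ) / lam ^ 2 + 30450 / lam ^ 2 = 30451 / lam ^ 2 by ring]

lemma abs_tsum_poissonPMF_mul_log_factorial_sub_le (hlam : 1 ≤ lam) :
    Summable (fun y ↦ poissonPMF lam y * log (y.factorial : ℝ)) ∧
      |∑' y, poissonPMF lam y * log (y.factorial : ℝ) -
        (lam * log lam - lam + log (2 * π * exp 1 * lam) / 2 - 1 / (12 * lam))| ≤
        30486 / lam ^ 2 := by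
  have h0 : 0 < lam := by linarith
  obtain ⟨B, hB, hBle⟩ := exists_hasSum_poissonPMF_mul_approxError_le hlam
  obtain ⟨hsum, happrox⟩ := abs_tsum_mul_sub_le (fun y ↦ (poissonPMF_pos h0 y).le)
    (hasSum_poissonPMF_mul_logFactorialApprox h0) hB
    (abs_log_factorial_sub_logFactorialApprox_le h0)
  refine ⟨hsum, (abs_sub_le _ (lam * log lam - lam + log (2 * π * exp 1 * lam) / 2 -
    1 / (12 * lam) + logFactorialApproxMeanRemainder lam) _).trans ?_⟩
  rw [add_sub_cancel_left]
  linarith [abs_logFactorialApproxMeanRemainder_le hlam,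
    show 30451 / lam ^ 2 + 35 / lam ^ 2 = 30486 / lam ^ 2 by ring]

end LogFactorialMean

lemma log_poissonPMF {lam : ℝ} (hlam : 0 < lam) (y : ℕ) :
    log (poissonPMF lam y) = -lam + y * log lam - log (y.factorial : ℝ) := by
  rw [poissonPMF, log_div (by positivity) (by positivity), log_mul (exp_pos _).ne'
    (by positivity), log_exp, log_pow]

lemma hasSum_neg_poissonPMF_mul_log {lam : ℝ} (hlam : 0 < lam)
    (hs : Summable (fun y ↦ poissonPMF lam y * log (y.factorial : ℝ))) :
    HasSum (fun y ↦ -(poissonPMF lam y * log (poissonPMF lam y)))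
      (lam - lam * log lam + ∑' y, poissonPMF lam y * log (y.factorial : ℝ)) := by
  have hmean : HasSum (fun y ↦ poissonPMF lam y * (y * 1)) (lam * 1) :=
    HasSum.poissonPMF_mul_natCast_mul (by simpa using hasSum_poissonPMF lam)
  have H := (((hasSum_poissonPMF lam).mul_left lam).sub (hmean.mul_left (log lam))).add hs.hasSum
  rw [show lam - lam * log lam = lam * 1 - log lam * (lam * 1) by ring]
  exact H.congr_fun fun y ↦ by rw [log_poissonPMF hlam]; ring

lemma poissonEntropy_eq_tsum_div_log_two (lam : ℝ) :
    poissonEntropy lam = (∑' y, -(poissonPMF lam y * log (poissonPMF lam y))) / log 2 := by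
  rw [poissonEntropy, ← tsum_div_const]
  congr 1
  ext y
  rw [logb]
  ring

lemma abs_poissonEntropy_sub_le {lam : ℝ} (hlam : 1 ≤ lam) :
    |poissonEntropy lam - ((1 / 2) * logb 2 (2 * π * exp 1 * lam) - 1 / (12 * lam * log 2))| ≤
      30486 / log 2 * |1 / lam ^ 2| := by
  have h0 : 0 < lam := by linarith
  have hlog2 : 0 < log 2 := log_pos one_lt_two
  obtain ⟨hsum, hbound⟩ := abs_tsum_poissonPMF_mul_log_factorial_sub_le hlam
  rw [poissonEntropy_eq_tsum_div_log_two, (hasSum_neg_poissonPMF_mul_log h0 hsum).tsum_eq, logb,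
    abs_of_pos (by positivity : (0 : ℝ) < 1 / lam ^ 2)]
  have heq : (lam - lam * log lam + ∑' y, poissonPMF lam y * log (y.factorial : ℝ)) / log 2 -
      (1 / 2 * (log (2 * π * exp 1 * lam) / log 2) - 1 / (12 * lam * log 2)) =
      (∑' y, poissonPMF lam y * log (y.factorial : ℝ) -
        (lam * log lam - lam + log (2 * π * exp 1 * lam) / 2 - 1 / (12 * lam))) / log 2 := by
    field_simp
    ring
  rwa [heq, abs_div, abs_of_pos hlog2, div_le_iff₀ hlog2, mul_right_comm (30486 / log 2),
    div_mul_cancel₀ _ hlog2.ne', mul_one_div]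

/-- Asymptotic expansion of the Poisson entropy:
`H(Pois(λ)) = (1/2)log₂(2πeλ) - 1/(12λ ln 2) + O(1/λ²)` as `λ → ∞`;
in particular the difference to `(1/2)log₂(2πeλ)` tends to `0`. -/
theorem poisson_entropy_asymptotics :
    (fun lam : ℝ => poissonEntropy lam -
        ((1 / 2) * Real.logb 2 (2 * Real.pi * Real.exp 1 * lam) -
          1 / (12 * lam * Real.log 2))) =O[atTop]
      (fun lam : ℝ => 1 / lam ^ 2) ∧
    Tendsto (fun lam : ℝ => poissonEntropy lam -
        (1 / 2) * Real.logb 2 (2 * Real.pi * Real.exp 1 * lam)) atTop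
      (nhds 0) := by
  have hO : (fun lam : ℝ => poissonEntropy lam -
      ((1 / 2) * logb 2 (2 * π * exp 1 * lam) - 1 / (12 * lam * log 2))) =O[atTop]
      (fun lam : ℝ => 1 / lam ^ 2) :=
    Asymptotics.IsBigO.of_bound _ <| (eventually_ge_atTop 1).mono fun lam hlam ↦ by
      simpa only [Real.norm_eq_abs] using abs_poissonEntropy_sub_le hlam
  refine ⟨hO, ?_⟩
  have hsq : Tendsto (fun lam : ℝ ↦ 1 / lam ^ 2) atTop (nhds 0) :=
    (tendsto_pow_atTop two_ne_zero).inv_tendsto_atTop.congr fun _ ↦ (one_div _).symm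
  have hcorr : Tendsto (fun lam : ℝ ↦ 1 / (12 * lam * log 2)) atTop (nhds 0) :=
    ((tendsto_id.const_mul_atTop (by norm_num : (0 : ℝ) < 12)).atTop_mul_const
      (log_pos one_lt_two)).inv_tendsto_atTop.congr fun _ ↦ (one_div _).symm
  simpa using ((hO.trans_tendsto hsq).sub hcorr).congr fun lam ↦ by ring
end
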